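/- arXiv:2403.09152 — 2 statements merged into one kernel-verified Lean document; each statement's English description precedes it below -/
import Mathlib

section
/- Given totally skew-symmetric constants T_{ijk}, skew-symmetric constants g⁰_{ij} and A_{ij}, constants B_i, suppose g_{ij}(u) = T_{ijk}u^k + g⁰_{ij} is invertible at u, and define V^i = g^{is}(A_{sl}u^l + B_s) where g^{is} is the inverse matrix of g_{ij}. Then the algebraic condition g_{qj}(∂V^j/∂u^p) + g_{pj}(∂V^j/∂u^q) = 0 holds for all p, q at every point where g is invertible. -/
/-!
Near `u` the determinant of `g` stays nonzero, so `g v *ᵥ V v = A v + B` holds identically on a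
neighbourhood of `u`, and `V` is differentiable at `u` by Cramer's rule. Differentiating this
identity in the direction `e_p` gives `g_{qj} ∂_p V^j = A_{qp} - T_{qjp} V^j`; symmetrising in
`p, q` kills both terms on the right, since `A` is skew and `T_{qjp}` is skew in `q, p`.
-/

open Matrix Filter Topology

section MatrixCalculus

variable {m n E : Type*} [Fintype n] [NormedAddCommGroup E] [NormedSpace ℝ E]
  {u : E}

theorem fderiv_sum_mul_add_const_single [DecidableEq n] (c : n → ℝ) (b : ℝ) (x : n → ℝ)
    (p : n) : fderiv ℝ (fun v : n → ℝ => (∑ k, c k * v k) + b) x (Pi.single p 1) = c p := by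
  have hk : ∀ k, HasFDerivAt (fun v : n → ℝ => c k * v k)
      (c k • ContinuousLinearMap.proj (R := ℝ) (φ := fun _ : n => ℝ) k) x :=
    fun k => (hasFDerivAt_apply k x).const_mul (c k)
  have h := (HasFDerivAt.fun_sum (u := Finset.univ) fun k _ => hk k).add_const b
  simp [h.fderiv, Pi.single_apply]

theorem differentiableAt_det [DecidableEq n] {M : E → Matrix n n ℝ}
    (hM : ∀ i j, DifferentiableAt ℝ (fun v => M v i j) u) :
    DifferentiableAt ℝ (fun v => (M v).det) u := by
  simp only [det_apply]
  fun_prop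

theorem differentiableAt_adjugate [DecidableEq n] {M : E → Matrix n n ℝ}
    (hM : ∀ i j, DifferentiableAt ℝ (fun v => M v i j) u) (i j : n) :
    DifferentiableAt ℝ (fun v => (M v).adjugate i j) u := by
  simp only [adjugate_apply]
  refine differentiableAt_det (M := fun v => (M v).updateRow j (Pi.single i 1)) fun a b => ?_
  rcases eq_or_ne a j with rfl | ha
  · simp only [updateRow_self]
    fun_prop
  · simp only [updateRow_ne ha]
    exact hM a b

theorem differentiableAt_inv_mulVec [DecidableEq n] {M : E → Matrix n n ℝ} {F : E → n → ℝ}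
    (hM : ∀ i j, DifferentiableAt ℝ (fun v => M v i j) u)
    (hF : ∀ i, DifferentiableAt ℝ (fun v => F v i) u) (hdet : (M u).det ≠ 0) (i : n) :
    DifferentiableAt ℝ (fun v => ((M v)⁻¹ *ᵥ F v) i) u := by
  simp only [inv_def, smul_mulVec]
  simp only [Pi.smul_apply, smul_eq_mul, Ring.inverse_eq_inv', mulVec, dotProduct]
  have hdetM := differentiableAt_det hM
  have hadjM := differentiableAt_adjugate hM
  fun_prop (disch := assumption)

theorem sum_fderiv_of_mulVec_eventuallyEq {M : E → Matrix m n ℝ} {W : E → n → ℝ}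
    {F : E → m → ℝ} (hM : ∀ i j, DifferentiableAt ℝ (fun v => M v i j) u)
    (hW : ∀ j, DifferentiableAt ℝ (fun v => W v j) u) (hMW : (fun v => M v *ᵥ W v) =ᶠ[𝓝 u] F)
    (i : m) (h : E) :
    ∑ j, (M u i j * fderiv ℝ (fun v => W v j) u h + W u j * fderiv ℝ (fun v => M v i j) u h) =
      fderiv ℝ (fun v => F v i) u h := by
  have hFi : (fun v => ∑ j, M v i j * W v j) =ᶠ[𝓝 u] fun v => F v i :=
    hMW.mono fun v hv => congrFun hv i
  have hj : ∀ j, HasFDerivAt (fun v => M v i j * W v j)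
      (M u i j • fderiv ℝ (fun v => W v j) u + W u j • fderiv ℝ (fun v => M v i j) u) u :=
    fun j => (hM i j).hasFDerivAt.mul (hW j).hasFDerivAt
  rw [← hFi.fderiv_eq, (HasFDerivAt.fun_sum (u := Finset.univ) fun j _ => hj j).fderiv]
  simp

end MatrixCalculus

theorem stmt_5_general (N : ℕ)
    (T : Fin N → Fin N → Fin N → ℝ)
    (hT1 : ∀ i j k, T i j k = -T j i k)
    (hT2 : ∀ i j k, T i j k = -T i k j)
    (g0 A : Matrix (Fin N) (Fin N) ℝ)
    (hA : ∀ i j, A i j = -A j i)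
    (B : Fin N → ℝ)
    (g : (Fin N → ℝ) → Matrix (Fin N) (Fin N) ℝ)
    (hg : ∀ u i j, g u i j = (∑ k, T i j k * u k) + g0 i j)
    (V : (Fin N → ℝ) → Fin N → ℝ)
    (hV : ∀ u, V u = (g u)⁻¹.mulVec (fun s => (∑ l, A s l * u l) + B s))
    (u : Fin N → ℝ) (hu : IsUnit (g u).det) :
    ∀ p q : Fin N,
      (∑ j, g u q j * fderiv ℝ (fun v => V v j) u (Pi.single p 1)) +
      (∑ j, g u p j * fderiv ℝ (fun v => V v j) u (Pi.single q 1)) = 0 := by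
  have hgd : ∀ i j, DifferentiableAt ℝ (fun v => g v i j) u := by
    simp only [hg]
    fun_prop
  have hFd : ∀ s, DifferentiableAt ℝ (fun v => (∑ l, A s l * v l) + B s) u := by
    fun_prop
  have hVd : ∀ j, DifferentiableAt ℝ (fun v => V v j) u := by
    simp only [hV]
    exact differentiableAt_inv_mulVec hgd hFd hu.ne_zero
  have hgV : (fun v => g v *ᵥ V v) =ᶠ[𝓝 u] fun v s => (∑ l, A s l * v l) + B s := by
    filter_upwards [(differentiableAt_det hgd).continuousAt.eventually_ne hu.ne_zero] with v hv
    rw [hV, mulVec_mulVec, mul_nonsing_inv _ (isUnit_iff_ne_zero.2 hv), one_mulVec]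
  have hderiv : ∀ p q, ∑ j, (g u q j * fderiv ℝ (fun v => V v j) u (Pi.single p 1) +
      V u j * T q j p) = A q p := by
    intro p q
    have := sum_fderiv_of_mulVec_eventuallyEq hgd hVd hgV q (Pi.single p 1)
    simpa only [hg, fderiv_sum_mul_add_const_single] using this
  have hTskew : ∀ p q j, T p j q = -T q j p := fun p q j => by
    linarith [hT1 p j q, hT2 j p q, hT1 j q p]
  intro p q
  have hqp := hderiv p q
  have hpq := hderiv q p
  rw [Finset.sum_add_distrib] at hqp hpq
  simp only [hTskew p q, mul_neg, Finset.sum_neg_distrib] at hpq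
  linarith [hA p q]

/-- The flux `V^i = g^{is}(A_{sl}u^l + B_s)` satisfies the algebraic compatibility
condition `g_{qj} ∂V^j/∂u^p + g_{pj} ∂V^j/∂u^q = 0` wherever `g` is invertible. -/
theorem stmt_5 (N : ℕ)
    (T : Fin N → Fin N → Fin N → ℝ)
    (hT1 : ∀ i j k, T i j k = -T j i k)
    (hT2 : ∀ i j k, T i j k = -T i k j)
    (g0 A : Matrix (Fin N) (Fin N) ℝ)
    (hg0 : ∀ i j, g0 i j = -g0 j i) (hA : ∀ i j, A i j = -A j i)
    (B : Fin N → ℝ)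
    (g : (Fin N → ℝ) → Matrix (Fin N) (Fin N) ℝ)
    (hg : ∀ u i j, g u i j = (∑ k, T i j k * u k) + g0 i j)
    (V : (Fin N → ℝ) → Fin N → ℝ)
    (hV : ∀ u, V u = (g u)⁻¹.mulVec (fun s => (∑ l, A s l * u l) + B s))
    (u : Fin N → ℝ) (hu : IsUnit (g u).det) :
    ∀ p q : Fin N,
      (∑ j, g u q j * fderiv ℝ (fun v => V v j) u (Pi.single p 1)) +
      (∑ j, g u p j * fderiv ℝ (fun v => V v j) u (Pi.single q 1)) = 0 :=
  stmt_5_general N T hT1 hT2 g0 A hA B g hg V hV u hu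
end

section
/- Under the exchange of dependent variables ū^i = V^i(u), the transformed metric ḡ_{ij} := g_{is} ∂V^s/∂u^j equals T_{ijk}V^k + A_{ij}, i.e. ḡ has again the canonical form 'totally skew-symmetric constant three-tensor contracted with ū plus a constant skew-symmetric matrix' with T̄ = T and ḡ⁰ = A. -/
/-!
Near `u` the matrix `g` stays invertible, so `g v *ᵥ V v = A v + B` holds identically there.
Differentiating this identity along `e_j` gives `(∂_j g) V + g ∂_j V = A e_j`, and
`(∂_j g)_{is} = T_{isj} = -T_{ijs}` by the skew-symmetry of `T` in its last two indices.
-/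

open Matrix Filter Topology

section MatrixCalculus

variable {𝕜 E : Type*} [NontriviallyNormedField 𝕜] [NormedAddCommGroup E] [NormedSpace 𝕜 E]
  {m n : Type*} [Fintype n] {x : E}

theorem DifferentiableAt.matrix_det [DecidableEq n] {M : E → Matrix n n 𝕜}
    (hM : ∀ i j, DifferentiableAt 𝕜 (fun y => M y i j) x) :
    DifferentiableAt 𝕜 (fun y => (M y).det) x := by
  simp only [det_apply']
  fun_prop

theorem DifferentiableAt.matrix_adjugate [DecidableEq n] {M : E → Matrix n n 𝕜}
    (hM : ∀ i j, DifferentiableAt 𝕜 (fun y => M y i j) x) (i j : n) :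
    DifferentiableAt 𝕜 (fun y => (M y).adjugate i j) x := by
  simp only [adjugate_apply]
  refine DifferentiableAt.matrix_det fun k l => ?_
  by_cases hk : k = j
  · simp only [hk, updateRow_self]
    exact differentiableAt_const _
  · simpa only [updateRow_ne hk] using hM k l

theorem DifferentiableAt.matrix_inv [DecidableEq n] {M : E → Matrix n n 𝕜}
    (hM : ∀ i j, DifferentiableAt 𝕜 (fun y => M y i j) x) (hx : IsUnit (M x).det) (i j : n) :
    DifferentiableAt 𝕜 (fun y => (M y)⁻¹ i j) x := by
  simp only [inv_def, Ring.inverse_eq_inv', Matrix.smul_apply, smul_eq_mul]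
  exact ((DifferentiableAt.matrix_det hM).inv hx.ne_zero).mul
    (DifferentiableAt.matrix_adjugate hM i j)

theorem DifferentiableAt.matrix_mulVec {M : E → Matrix m n 𝕜} {w : E → n → 𝕜}
    (hM : ∀ i j, DifferentiableAt 𝕜 (fun y => M y i j) x)
    (hw : ∀ j, DifferentiableAt 𝕜 (fun y => w y j) x) (i : m) :
    DifferentiableAt 𝕜 (fun y => (M y *ᵥ w y) i) x := by
  simp only [mulVec, dotProduct]
  exact DifferentiableAt.fun_sum fun j _ => (hM i j).mul (hw j)

theorem fderiv_matrix_mulVec_apply {M : E → Matrix m n 𝕜} {w : E → n → 𝕜}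
    (hM : ∀ i j, DifferentiableAt 𝕜 (fun y => M y i j) x)
    (hw : ∀ j, DifferentiableAt 𝕜 (fun y => w y j) x) (i : m) (h : E) :
    fderiv 𝕜 (fun y => (M y *ᵥ w y) i) x h =
      ∑ j, (M x i j * fderiv 𝕜 (fun y => w y j) x h + fderiv 𝕜 (fun y => M y i j) x h * w x j) := by
  simp only [mulVec, dotProduct]
  rw [fderiv_fun_sum (A := fun j y => M y i j * w y j) fun j _ => (hM i j).mul (hw j)]
  simp [fderiv_fun_mul (hM i _) (hw _), mul_comm]

end MatrixCalculus

theorem eventually_mulVec_nonsing_inv_mulVec {X 𝕜 n : Type*} [TopologicalSpace X]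
    [NontriviallyNormedField 𝕜] [Fintype n] [DecidableEq n] {M : X → Matrix n n 𝕜} {x : X}
    (hdet : ContinuousAt (fun y => (M y).det) x) (hx : IsUnit (M x).det) (b : X → n → 𝕜) :
    (fun y => M y *ᵥ ((M y)⁻¹ *ᵥ b y)) =ᶠ[𝓝 x] b := by
  filter_upwards [hdet.eventually_ne hx.ne_zero] with y hy
  rw [mulVec_mulVec, mul_nonsing_inv _ (isUnit_iff_ne_zero.2 hy), one_mulVec]

section Affine

variable {𝕜 ι : Type*} [NontriviallyNormedField 𝕜] [Fintype ι] (c : ι → 𝕜) (b : 𝕜) (u : ι → 𝕜)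

theorem differentiableAt_affine :
    DifferentiableAt 𝕜 (fun v : ι → 𝕜 => ∑ k, c k * v k + b) u := by
  fun_prop

theorem fderiv_affine_apply_single [DecidableEq ι] (j : ι) :
    fderiv 𝕜 (fun v : ι → 𝕜 => ∑ k, c k * v k + b) u (Pi.single j 1) = c j := by
  have hf : HasFDerivAt (fun v : ι → 𝕜 => ∑ k, c k * v k + b)
      (∑ k, c k • (ContinuousLinearMap.proj k : (ι → 𝕜) →L[𝕜] 𝕜)) u :=
    (HasFDerivAt.fun_sum fun k _ =>
      (ContinuousLinearMap.proj k : (ι → 𝕜) →L[𝕜] 𝕜).hasFDerivAt.const_mul (c k)).add_const b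
  simp [hf.fderiv, Pi.single_apply]

end Affine

theorem stmt_7_general (N : ℕ)
    (T : Fin N → Fin N → Fin N → ℝ)
    (hT2 : ∀ i j k, T i j k = -T i k j)
    (g0 A : Matrix (Fin N) (Fin N) ℝ)
    (B : Fin N → ℝ)
    (g : (Fin N → ℝ) → Matrix (Fin N) (Fin N) ℝ)
    (hg : ∀ u i j, g u i j = (∑ k, T i j k * u k) + g0 i j)
    (V : (Fin N → ℝ) → Fin N → ℝ)
    (hV : ∀ u, V u = (g u)⁻¹.mulVec (fun s => (∑ l, A s l * u l) + B s))
    (u : Fin N → ℝ) (hu : IsUnit (g u).det) :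
    ∀ i j, (∑ s, g u i s * fderiv ℝ (fun v => V v s) u (Pi.single j 1))
        = (∑ k, T i j k * V u k) + A i j := by
  intro i j
  have hg_fun : ∀ i j, (fun v => g v i j) = fun v => ∑ k, T i j k * v k + g0 i j :=
    fun i j => funext fun v => hg v i j
  have hg_diff : ∀ i j, DifferentiableAt ℝ (fun v => g v i j) u := fun i j => by
    rw [hg_fun]
    exact differentiableAt_affine _ _ _
  have hV_diff : ∀ s, DifferentiableAt ℝ (fun v => V v s) u := by
    simp only [hV]
    exact DifferentiableAt.matrix_mulVec (DifferentiableAt.matrix_inv hg_diff hu)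
      fun s => differentiableAt_affine _ _ _
  have hgV : (fun v => (g v *ᵥ V v) i) =ᶠ[𝓝 u] fun v => ∑ l, A i l * v l + B i := by
    simp only [hV]
    exact (eventually_mulVec_nonsing_inv_mulVec
      (DifferentiableAt.matrix_det hg_diff).continuousAt hu _).fun_comp (· i)
  have key := fderiv_matrix_mulVec_apply hg_diff hV_diff i (Pi.single j 1)
  rw [hgV.fderiv_eq, fderiv_affine_apply_single] at key
  simp only [hg_fun, fderiv_affine_apply_single, Finset.sum_add_distrib] at key
  have hT : ∑ s, T i s j * V u s = -∑ k, T i j k * V u k := by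
    simp [hT2 i _ j, Finset.sum_neg_distrib]
  linarith

/-- Under the exchange `ū^i = V^i(u)`, the transformed metric
`ḡ_{ij} = g_{is} ∂V^s/∂u^j` equals `T_{ijk} V^k + A_{ij}`. -/
theorem stmt_7 (N : ℕ)
    (T : Fin N → Fin N → Fin N → ℝ)
    (hT1 : ∀ i j k, T i j k = -T j i k)
    (hT2 : ∀ i j k, T i j k = -T i k j)
    (g0 A : Matrix (Fin N) (Fin N) ℝ)
    (hg0 : ∀ i j, g0 i j = -g0 j i) (hA : ∀ i j, A i j = -A j i)
    (B : Fin N → ℝ)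
    (g : (Fin N → ℝ) → Matrix (Fin N) (Fin N) ℝ)
    (hg : ∀ u i j, g u i j = (∑ k, T i j k * u k) + g0 i j)
    (V : (Fin N → ℝ) → Fin N → ℝ)
    (hV : ∀ u, V u = (g u)⁻¹.mulVec (fun s => (∑ l, A s l * u l) + B s))
    (u : Fin N → ℝ) (hu : IsUnit (g u).det) :
    ∀ i j, (∑ s, g u i s * fderiv ℝ (fun v => V v s) u (Pi.single j 1))
        = (∑ k, T i j k * V u k) + A i j :=
  stmt_7_general N T hT2 g0 A B g hg V hV u hu
end
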